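/- Let S be a positively graded commutative ring such that every S_i is a finitely generated S₀-module, with S₀ Artinian, and let X be a finitely generated graded S-module such that X_j = 0 for all j greater than some integer J. Then each X_j has finite length over S₀, and the *length of X over S equals the sum over j of the S₀-lengths of the components X_j (in particular both are finite). -/

import Mathlib

open DirectSum

section
variable {A M : Type*} [CommRing A] [AddCommGroup M] [Module A M]

/-- The length of a module, as the supremum of lengths of strict chains of submodules. -/
noncomputable def moduleLength (R : Type*) [Ring R] (N : Type*) [AddCommGroup N]
    [Module R N] : ℕ∞ :=
  ⨆ (n : ℕ) (c : Fin (n + 1) → Submodule R N) (_ : StrictMono c), (n : ℕ∞)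

/-- A submodule of a graded module is graded if it is stable under taking homogeneous
components. -/
def IsGradedSubmodule (ℳ : ℤ → AddSubgroup M) [DirectSum.Decomposition ℳ]
    (N : Submodule A M) : Prop :=
  ∀ (i : ℤ) (m : M), m ∈ N → (DirectSum.decompose ℳ m i : M) ∈ N

/-- The *length of a graded module: the supremum of lengths of strict chains of graded
submodules. -/
noncomputable def starLength (A : Type*) [CommRing A] {M : Type*} [AddCommGroup M] [Module A M]
    (ℳ : ℤ → AddSubgroup M) [DirectSum.Decomposition ℳ] : ℕ∞ :=
  ⨆ (n : ℕ) (c : Fin (n + 1) → Submodule A M) (_ : StrictMono c)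
    (_ : ∀ i, IsGradedSubmodule ℳ (c i)), (n : ℕ∞)

variable (𝒜 : ℤ → AddSubgroup A) (ℳ : ℤ → AddSubgroup M)
variable [GradedRing 𝒜] [SetLike.GradedSMul 𝒜 ℳ]

/-- The degree-`j` component of a graded module is a module over the degree-zero subring. -/
noncomputable instance gradeZeroModule (j : ℤ) : Module (𝒜 0) (ℳ j) where
  smul a m := ⟨(a : A) • (m : M), by
    have h := SetLike.GradedSMul.smul_mem a.2 m.2
    rwa [show (0 : ℤ) +ᵥ j = j from zero_add j] at h⟩
  one_smul m := by
    ext; show ((1 : 𝒜 0) : A) • (m : M) = m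
    rw [SetLike.GradeZero.coe_one, one_smul]
  mul_smul a b m := by
    ext; show ((a * b : 𝒜 0) : A) • (m : M) = _
    rw [SetLike.GradeZero.coe_mul]; exact mul_smul _ _ _
  smul_zero a := by ext; exact smul_zero _
  smul_add a m n := by ext; exact smul_add _ _ _
  add_smul a b m := by
    ext; show ((a + b : 𝒜 0) : A) • (m : M) = _
    rw [AddMemClass.coe_add]; exact add_smul _ _ _
  zero_smul m := by ext; exact zero_smul A _

/-!
A graded submodule is determined by its homogeneous components, and `X` has only finitely many
nonzero components (it is generated by finitely many homogeneous elements and `S` is positively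
graded). Hence each step of a strict chain of graded submodules strictly increases the sum of the
`S₀`-heights of the components, which bounds `*ℓ(X)` by `Σ ℓ(X_j)`. Conversely, positivity makes
`N ↦ N ⊕ X_{>k}` strictly monotone from `S₀`-submodules of `X_k` to graded submodules, and
`0 ⊕ X_{>k} = X_{k+1} ⊕ X_{>k+1}`, so maximal chains in `X_J, …, X_I` concatenate to a graded chain
of length `Σ ℓ(X_j)`. Each `X_j` is finitely generated over the Artinian ring `S₀`, so these lengths
are finite.
-/

open Order

section ChainLength

variable {α : Type*} [Preorder α]

lemma Order.iSup_strictMono_fin_eq_iSup_length :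
    ⨆ (n : ℕ) (c : Fin (n + 1) → α) (_ : StrictMono c), (n : ℕ∞) =
      ⨆ p : LTSeries α, (p.length : ℕ∞) :=
  le_antisymm (iSup_le fun n => iSup₂_le fun c hc => le_iSup_of_le (LTSeries.mk n c hc) le_rfl)
    (iSup_le fun p => le_iSup₂_of_le p.length p.toFun (le_iSup_of_le p.strictMono le_rfl))

lemma Order.krullDim_eq_iSup_strictMono_fin [Nonempty α] :
    krullDim α = ↑(⨆ (n : ℕ) (c : Fin (n + 1) → α) (_ : StrictMono c), (n : ℕ∞)) := by
  rw [krullDim_eq_iSup_length, iSup_strictMono_fin_eq_iSup_length]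

lemma Order.height_lt_top [FiniteDimensionalOrder α] (x : α) : height x < ⊤ := by
  rw [← WithBot.coe_lt_coe]
  exact (height_le_krullDim x).trans_lt krullDim_ne_top_of_finiteDimensionalOrder.lt_top

lemma Order.height_le_sum_height_apply {ι : Type*} [Fintype ι] {Q : ι → Type*}
    [∀ i, Preorder (Q i)] [∀ i, FiniteDimensionalOrder (Q i)] (q : ∀ i, Q i) :
    height q ≤ ∑ i, height (q i) := by
  have hcast {i} (x : Q i) : ((height x).toNat : ℕ∞) = height x :=
    ENat.natCast_toNat (height_lt_top x).ne
  let φ : (∀ i, Q i) → ℕ := fun q => ∑ i, (height (q i)).toNat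
  have hφ : StrictMono φ := fun a b hab => by
    obtain ⟨hle, i, hi⟩ := Pi.lt_def.mp hab
    refine Finset.sum_lt_sum (fun j _ => ENat.toNat_le_toNat (height_mono (hle j))
      (height_lt_top _).ne) ⟨i, Finset.mem_univ i, ?_⟩
    have := height_strictMono hi (height_lt_top _)
    rwa [← hcast (a i), ← hcast (b i), Nat.cast_lt] at this
  calc height q ≤ height (φ q) := height_le_height_apply_of_strictMono φ hφ q
    _ = ∑ i, height (q i) := by simp only [height_nat, φ, Nat.cast_sum, hcast]

lemma StrictMono.height_apply_bot_add_height_le {β : Type*} [PartialOrder β] [OrderBot β]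
    {g : β → α} (hg : StrictMono g) (b : β) : height (g ⊥) + height b ≤ height (g b) := by
  cases hbot : height (g ⊥) with
  | top => simpa [hbot] using height_mono (hg.monotone (bot_le (a := b)))
  | coe n₁ =>
    cases hb : height b with
    | top => simpa [hb] using height_le_height_apply_of_strictMono g hg b
    | coe n₂ =>
      obtain ⟨p, hp, rfl⟩ := exists_series_of_le_height (g ⊥) hbot.ge
      obtain ⟨q, hq, rfl⟩ := exists_series_of_le_height b hb.ge
      by_cases hq₀ : q.head = ⊥
      · let r := p.smash (q.map g hg) (by simp [hp, hq₀])
        have : r.length = p.length + q.length := RelSeries.smash_length ..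
        exact_mod_cast this ▸ length_le_height (by simp [r, hq])
      · let r := p.append (q.map g hg) (by simpa [hp] using hg (bot_lt_iff_ne_bot.mpr hq₀))
        have : r.length = p.length + q.length + 1 := RelSeries.append_length ..
        calc ((p.length + q.length : ℕ) : ℕ∞) ≤ r.length := by simp [this]
          _ ≤ height (g b) := length_le_height (by simp [r, hq])

end ChainLength

lemma moduleLength_eq_length (R : Type*) [Ring R] (N : Type*) [AddCommGroup N] [Module R N] :
    moduleLength R N = Module.length R N :=
  WithBot.coe_injective <| by rw [Module.coe_length, krullDim_eq_iSup_strictMono_fin]; rfl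

section Graded

variable [DirectSum.Decomposition ℳ]

def HomogeneousSubmodule.toSubmoduleEmbedding : HomogeneousSubmodule 𝒜 ℳ ↪o Submodule A M :=
  OrderEmbedding.ofMapLEIff HomogeneousSubmodule.toSubmodule fun _ _ => Iff.rfl

lemma starLength_eq_krullDim :
    (starLength A ℳ : WithBot ℕ∞) = krullDim (HomogeneousSubmodule 𝒜 ℳ) := by
  let e := HomogeneousSubmodule.toSubmoduleEmbedding 𝒜 ℳ
  have : Nonempty (HomogeneousSubmodule 𝒜 ℳ) := ⟨⟨⊥, fun _ _ h => by simp_all⟩⟩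
  rw [krullDim_eq_iSup_strictMono_fin, starLength]
  congr 1
  refine le_antisymm (iSup_le fun n => iSup₂_le fun c hc => iSup_le fun hg => ?_)
    (iSup_le fun n => iSup₂_le fun c hc => ?_)
  · exact le_iSup₂_of_le n (fun i => (⟨c i, hg i⟩ : HomogeneousSubmodule 𝒜 ℳ))
      (le_iSup_of_le (fun i j h => e.lt_iff_lt.mp (hc h)) le_rfl)
  · exact le_iSup₂_of_le n (e ∘ c) (le_iSup₂_of_le (e.strictMono.comp hc)
      (fun i => (c i).isHomogeneous) le_rfl)

lemma coe_decompose_smul_of_mem (a : A) {d : ℤ} {y : M} (hy : y ∈ ℳ d) (j : ℤ) :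
    (decompose ℳ (a • y) j : M) = (decompose 𝒜 a (j - d) : A) • y := by
  induction a using DirectSum.Decomposition.inductionOn 𝒜 with
  | zero => simp
  | @homogeneous e a =>
    have hmem : (a : A) • y ∈ ℳ (e + d) := SetLike.GradedSMul.smul_mem a.2 hy
    by_cases hj : e + d = j
    · subst hj
      rw [decompose_of_mem_same ℳ hmem, add_sub_cancel_right, decompose_of_mem_same 𝒜 a.2]
    · rw [decompose_of_mem_ne ℳ hmem hj, decompose_of_mem_ne 𝒜 a.2 (by omega), zero_smul]
  | add a b ha hb => simp [add_smul, decompose_add, ha, hb]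

lemma coe_decompose_smul_of_forall_lt (hpos : ∀ i : ℤ, i < 0 → ∀ a ∈ 𝒜 i, a = 0) {k : ℤ} {m : M}
    (hm : ∀ j < k, (decompose ℳ m j : M) = 0) (a : A) {j : ℤ} (hj : j ≤ k) :
    (decompose ℳ (a • m) j : M) = (decompose 𝒜 a (j - k) : A) • (decompose ℳ m k : M) := by
  classical
  conv_lhs => rw [← sum_support_decompose ℳ m, Finset.smul_sum, decompose_sum,
    DFinsupp.finsetSum_apply, AddSubmonoidClass.coe_finsetSum]
  simp_rw [coe_decompose_smul_of_mem 𝒜 ℳ a (SetLike.coe_mem _)]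
  refine Finset.sum_eq_single k (fun i _ hik => ?_) (fun hk => ?_)
  · rcases hik.lt_or_gt with hlt | hgt
    · rw [hm i hlt, smul_zero]
    · rw [hpos _ (by omega) _ (SetLike.coe_mem _), zero_smul]
  · rw [DFinsupp.notMem_support_iff.mp hk, ZeroMemClass.coe_zero, smul_zero]

lemma exists_finset_homogeneous_span_eq_top [Module.Finite A M] :
    ∃ t : Finset (ℤ × M), (∀ p ∈ t, p.2 ∈ ℳ p.1) ∧
      Submodule.span A (Set.range fun p : t => p.1.2) = ⊤ := by
  classical
  obtain ⟨s, hs⟩ := Module.Finite.fg_top (R := A) (M := M)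
  refine ⟨s.biUnion fun x => (decompose ℳ x).support.image fun i => (i, (decompose ℳ x i : M)),
    ?_, ?_⟩
  · simp only [Finset.mem_biUnion, Finset.mem_image]
    rintro _ ⟨x, -, i, -, rfl⟩
    exact SetLike.coe_mem _
  · rw [eq_top_iff, ← hs, Submodule.span_le]
    intro x hx
    rw [← sum_support_decompose ℳ x]
    refine Submodule.sum_mem _ fun i hi => Submodule.subset_span ⟨⟨(i, _), ?_⟩, rfl⟩
    exact Finset.mem_biUnion.mpr ⟨x, hx, Finset.mem_image_of_mem _ hi⟩

lemma exists_eq_sum_smul_of_mem {t : Finset (ℤ × M)} (ht : ∀ p ∈ t, p.2 ∈ ℳ p.1)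
    (hspan : Submodule.span A (Set.range fun p : t => p.1.2) = ⊤) {j : ℤ} {x : M}
    (hx : x ∈ ℳ j) : ∃ c : t → A, x = ∑ p : t, (decompose 𝒜 (c p) (j - p.1.1) : A) • p.1.2 := by
  obtain ⟨c, hc⟩ :=
    (Submodule.mem_span_range_iff_exists_fun A).mp (hspan ▸ Submodule.mem_top (x := x))
  refine ⟨c, ?_⟩
  conv_lhs => rw [← decompose_of_mem_same ℳ hx, ← hc, decompose_sum, DFinsupp.finsetSum_apply,
    AddSubmonoidClass.coe_finsetSum]
  exact Finset.sum_congr rfl fun p _ => coe_decompose_smul_of_mem 𝒜 ℳ (c p) (ht p.1 p.2) j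

lemma exists_forall_lt_eq_zero (hpos : ∀ i : ℤ, i < 0 → ∀ a ∈ 𝒜 i, a = 0) [Module.Finite A M] :
    ∃ I : ℤ, ∀ j < I, ∀ x ∈ ℳ j, x = 0 := by
  obtain ⟨t, ht, hspan⟩ := exists_finset_homogeneous_span_eq_top (A := A) ℳ
  obtain ⟨I, hI⟩ := (t.image Prod.fst).bddBelow
  refine ⟨I, fun j hj x hx => ?_⟩
  obtain ⟨c, rfl⟩ := exists_eq_sum_smul_of_mem 𝒜 ℳ ht hspan hx
  refine Finset.sum_eq_zero fun p _ => ?_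
  have : I ≤ p.1.1 := hI (Finset.mem_image_of_mem Prod.fst p.2)
  rw [hpos _ (by omega) _ (SetLike.coe_mem _), zero_smul]

def gradedSMulRight {i d j : ℤ} (h : i + d = j) {z : M} (hz : z ∈ ℳ d) :
    𝒜 i →ₗ[𝒜 0] ℳ j where
  toFun a := ⟨(a : A) • z, h ▸ SetLike.GradedSMul.smul_mem a.2 hz⟩
  map_add' a b := Subtype.ext (add_smul (a : A) b z)
  map_smul' s a := Subtype.ext (mul_smul (s : A) a z)

lemma Module.Finite.grade (hfg : ∀ i : ℤ, Module.Finite (𝒜 0) (𝒜 i)) [Module.Finite A M]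
    (j : ℤ) : Module.Finite (𝒜 0) (ℳ j) := by
  obtain ⟨t, ht, hspan⟩ := exists_finset_homogeneous_span_eq_top (A := A) ℳ
  let f : (∀ p : t, 𝒜 (j - p.1.1)) →ₗ[𝒜 0] ℳ j :=
    ∑ p : t, (gradedSMulRight 𝒜 ℳ (sub_add_cancel j p.1.1) (ht p.1 p.2)).comp (LinearMap.proj p)
  refine Module.Finite.of_surjective f fun x => ?_
  obtain ⟨c, hc⟩ := exists_eq_sum_smul_of_mem 𝒜 ℳ ht hspan x.2
  refine ⟨fun p => decompose 𝒜 (c p) (j - p.1.1), Subtype.ext ?_⟩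
  simp [f, hc, gradedSMulRight]

namespace HomogeneousSubmodule

variable {𝒜 ℳ}

def component (p : HomogeneousSubmodule 𝒜 ℳ) (j : ℤ) : Submodule (𝒜 0) (ℳ j) where
  carrier := {x | (x : M) ∈ p}
  add_mem' := p.toSubmodule.add_mem
  zero_mem' := p.toSubmodule.zero_mem
  smul_mem' a _ hx := p.toSubmodule.smul_mem (a : A) hx

lemma mem_component {p : HomogeneousSubmodule 𝒜 ℳ} {j : ℤ} {x : ℳ j} :
    x ∈ p.component j ↔ (x : M) ∈ p :=
  Iff.rfl

lemma le_iff_forall_component_le {p q : HomogeneousSubmodule 𝒜 ℳ} :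
    p ≤ q ↔ ∀ j, p.component j ≤ q.component j := by
  refine ⟨fun h j x hx => h hx, fun h x hx => ?_⟩
  rw [← mem_toSubmodule_iff, q.isHomogeneous.mem_iff]
  exact fun j => h j (x := decompose ℳ x j) (p.isHomogeneous j hx)

lemma strictMono_component_restrict {s : Finset ℤ} (hs : ∀ j ∉ s, ∀ x ∈ ℳ j, x = 0) :
    StrictMono fun (p : HomogeneousSubmodule 𝒜 ℳ) (j : s) => p.component j := by
  have hle {p q : HomogeneousSubmodule 𝒜 ℳ} (h : ∀ j : s, p.component j ≤ q.component j) :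
      p ≤ q := by
    refine le_iff_forall_component_le.mpr fun j x hx => ?_
    by_cases hj : j ∈ s
    · exact h ⟨j, hj⟩ hx
    · rw [mem_component, hs j hj x x.2]
      exact zero_mem _
  exact Monotone.strictMono_of_injective (fun p q h j => le_iff_forall_component_le.mp h j)
    fun p q h => le_antisymm (hle fun j => (congr_fun h j).le) (hle fun j => (congr_fun h j).ge)

lemma height_le_sum_length [∀ j, FiniteDimensionalOrder (Submodule (𝒜 0) (ℳ j))] {s : Finset ℤ}
    (hs : ∀ j ∉ s, ∀ x ∈ ℳ j, x = 0) (p : HomogeneousSubmodule 𝒜 ℳ) :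
    height p ≤ ∑ j ∈ s, Module.length (𝒜 0) (ℳ j) :=
  calc height p ≤ height fun j : s => p.component j :=
        height_le_height_apply_of_strictMono _ (strictMono_component_restrict hs) p
    _ ≤ ∑ j : s, height (p.component j) := height_le_sum_height_apply _
    _ ≤ ∑ j : s, Module.length (𝒜 0) (ℳ j) :=
        Finset.sum_le_sum fun j _ => Module.length_eq_height (𝒜 0) (ℳ j) ▸ height_mono le_top
    _ = ∑ j ∈ s, Module.length (𝒜 0) (ℳ j) :=
        Finset.sum_coe_sort s fun j => Module.length (𝒜 0) (ℳ j)
section Truncation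

variable (hpos : ∀ i : ℤ, i < 0 → ∀ a ∈ 𝒜 i, a = 0)

-- `N ⊕ ⨁_{j > k} ℳ j`; positivity of the grading makes it an `A`-submodule.
def truncation (k : ℤ) (N : Submodule (𝒜 0) (ℳ k)) : HomogeneousSubmodule 𝒜 ℳ where
  carrier := {m | decompose ℳ m k ∈ N ∧ ∀ j < k, (decompose ℳ m j : M) = 0}
  zero_mem' := by simp
  add_mem' := by
    rintro x y ⟨hx, hx'⟩ ⟨hy, hy'⟩
    exact ⟨by simpa [decompose_add] using N.add_mem hx hy,
      fun j hj => by simp [decompose_add, hx' j hj, hy' j hj]⟩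
  smul_mem' a m := by
    rintro ⟨hm, hm'⟩
    refine ⟨?_, fun j hj => ?_⟩
    · have : decompose ℳ (a • m) k = decompose 𝒜 a 0 • decompose ℳ m k := Subtype.ext <| by
        rw [coe_decompose_smul_of_forall_lt 𝒜 ℳ hpos hm' a le_rfl, sub_self]; rfl
      exact this ▸ N.smul_mem _ hm
    · rw [coe_decompose_smul_of_forall_lt 𝒜 ℳ hpos hm' a hj.le,
        hpos _ (by omega) _ (SetLike.coe_mem _), zero_smul]
  is_homogeneous' i m := by
    rintro ⟨hm, hm'⟩
    refine ⟨?_, fun j hj => ?_⟩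
    · rw [decompose_coe]
      obtain rfl | hik := eq_or_ne i k
      · rwa [of_eq_same]
      · rw [of_eq_of_ne _ _ _ hik.symm]
        exact N.zero_mem
    · rw [decompose_coe]
      obtain rfl | hij := eq_or_ne i j
      · rw [of_eq_same]; exact hm' i hj
      · rw [of_eq_of_ne _ _ _ hij.symm]; rfl

lemma mem_truncation {k : ℤ} {N : Submodule (𝒜 0) (ℳ k)} {m : M} :
    m ∈ truncation hpos k N ↔ decompose ℳ m k ∈ N ∧ ∀ j < k, (decompose ℳ m j : M) = 0 :=
  Iff.rfl

lemma component_truncation_self (k : ℤ) (N : Submodule (𝒜 0) (ℳ k)) :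
    (truncation hpos k N).component k = N := by
  ext x
  rw [mem_component, mem_truncation]
  simp only [decompose_coe, of_eq_same]
  exact ⟨And.left, fun hx => ⟨hx, fun j hj => by rw [of_eq_of_ne _ _ _ hj.ne]; rfl⟩⟩

lemma truncation_strictMono (k : ℤ) : StrictMono (truncation hpos k (ℳ := ℳ)) :=
  Monotone.strictMono_of_injective (fun _ _ h _ hm => ⟨h hm.1, hm.2⟩) fun N N' h => by
    rw [← component_truncation_self hpos k N, h, component_truncation_self]

lemma truncation_bot_eq_top {k l : ℤ} (h : k + 1 = l) :
    truncation hpos k (⊥ : Submodule (𝒜 0) (ℳ k)) = truncation hpos l ⊤ := by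
  subst h
  refine HomogeneousSubmodule.ext 𝒜 ℳ (Submodule.ext fun m => ?_)
  simp only [mem_toSubmodule_iff, mem_truncation, Submodule.mem_bot, Submodule.mem_top, true_and]
  refine ⟨fun ⟨h0, h⟩ j hj => ?_,
    fun h => ⟨Subtype.ext (h k (lt_add_one k)), fun j hj => h j (by omega)⟩⟩
  rcases (Int.lt_add_one_iff.mp hj).lt_or_eq with hlt | rfl
  · exact h j hlt
  · simp [h0]

lemma sum_length_le_height_truncation (J k : ℤ) :
    ∑ j ∈ Finset.Icc k J, Module.length (𝒜 0) (ℳ j) ≤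
      height (truncation hpos k (⊤ : Submodule (𝒜 0) (ℳ k))) := by
  rcases lt_or_ge (J + 1) k with hk | hk
  · simp [Finset.Icc_eq_empty_of_lt (by omega : J < k)]
  induction k, hk using Int.leInductionDown with
  | base => simp
  | pred n hn ih =>
    rw [← Finset.insert_Icc_left_eq_Icc_sub_one (by omega),
      Finset.sum_insert (by simp), add_comm, Module.length_eq_height]
    calc _ ≤ height (truncation hpos (n - 1) ⊥) + height (⊤ : Submodule (𝒜 0) (ℳ (n - 1))) := by
          rw [truncation_bot_eq_top hpos (sub_add_cancel n 1)]
          gcongr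
      _ ≤ height (truncation hpos (n - 1) ⊤) :=
          (truncation_strictMono hpos (n - 1)).height_apply_bot_add_height_le ⊤
end Truncation

theorem krullDim_eq_finsum_length (hpos : ∀ i : ℤ, i < 0 → ∀ a ∈ 𝒜 i, a = 0)
    [∀ j, FiniteDimensionalOrder (Submodule (𝒜 0) (ℳ j))] {I J : ℤ}
    (hI : ∀ j < I, ∀ x ∈ ℳ j, x = 0) (hJ : ∀ j, J < j → ∀ x ∈ ℳ j, x = 0) :
    krullDim (HomogeneousSubmodule 𝒜 ℳ) = ↑(∑ᶠ j, Module.length (𝒜 0) (ℳ j)) := by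
  have hout : ∀ j ∉ Finset.Icc I J, ∀ x ∈ ℳ j, x = 0 := fun j hj => by
    rw [Finset.mem_Icc, not_and_or, not_le, not_le] at hj
    exact hj.elim (hI j) (hJ j)
  have hsupp : (Function.support fun j => Module.length (𝒜 0) (ℳ j)) ⊆ Finset.Icc I J :=
    fun j hj => by_contra fun hj' => hj <| Module.length_eq_zero_iff.mpr
      ⟨fun a b => Subtype.ext ((hout j hj' a a.2).trans (hout j hj' b b.2).symm)⟩
  rw [finsum_eq_sum_of_support_subset _ hsupp]
  refine le_antisymm ?_ ?_
  · rw [krullDim_eq_iSup_height]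
    exact iSup_le fun p => WithBot.coe_le_coe.mpr (height_le_sum_length hout p)
  · exact (WithBot.coe_le_coe.mpr (sum_length_le_height_truncation hpos J I)).trans
      (height_le_krullDim _)

end HomogeneousSubmodule

end Graded

/-- Let `S` be a positively graded ring with `S₀` Artinian and each `S_i` finitely generated
over `S₀`, and let `X` be a finitely generated graded `S`-module with `X_j = 0` for `j > J`.
Then each component `X_j` has finite length over `S₀`, and `*ℓ_S(X) = Σ_j ℓ_{S₀}(X_j)`. -/
theorem stmt_7 [DirectSum.Decomposition ℳ]
    (hpos : ∀ i : ℤ, i < 0 → ∀ a ∈ 𝒜 i, a = 0)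
    [IsArtinianRing (𝒜 0)]
    (hfg : ∀ i : ℤ, Module.Finite (𝒜 0) (𝒜 i))
    [Module.Finite A M]
    (J : ℤ) (hJ : ∀ j : ℤ, J < j → ∀ x ∈ ℳ j, x = 0) :
    (∀ j : ℤ, moduleLength (𝒜 0) (ℳ j) ≠ ⊤) ∧
      starLength A ℳ = ∑ᶠ j : ℤ, moduleLength (𝒜 0) (ℳ j) := by
  obtain ⟨I, hI⟩ := exists_forall_lt_eq_zero 𝒜 ℳ hpos
  have := Module.Finite.grade 𝒜 ℳ hfg
  have hlen : (fun j => moduleLength (𝒜 0) (ℳ j)) = fun j => Module.length (𝒜 0) (ℳ j) :=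
    funext fun j => moduleLength_eq_length _ _
  refine ⟨fun j => congr_fun hlen j ▸ Module.length_ne_top, WithBot.coe_injective ?_⟩
  rw [starLength_eq_krullDim 𝒜, HomogeneousSubmodule.krullDim_eq_finsum_length hpos hI hJ, hlen]
end
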